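/- arXiv:1511.08938 — 2 statements merged into one kernel-verified Lean document; each statement's English description precedes it below -/
import Mathlib

section
/- Let d and k be integers with 2 ≤ k+1 and 2(k+1) ≤ d, 2k+2 < d, and set q = (d−k)k/(d(d−1)), f = x^d + x^{d−k} y^k + y^{d−1} z ∈ ℂ[x,y,z]. Define a = y^{k−1}(q x^{d−2k} + y^{d−2k−1} z), b = −(q d x^{d−k−1} + q(d−k) x^{d−2k−1} y^k + d x^{k−1} y^{d−2k−1} z)/k, c = (d−1)(q(d−k) x^{d−2k−1} y^{k−1} z + d x^{k−1} y^{d−2k−2} z^2)/k. Then a·f_x + b·f_y + c·f_z = 0. -/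
/-!
In `a f_x + b f_y + c f_z` the three terms of `b · k x^{d-k} y^{k-1}` cancel three of the four terms
of `a f_x`, and `c f_z` cancels two of the three terms of `b · (d - 1) y^{d-2} z`. What survives is
`(d - k - (d - 1) q d / k) x^{d-k-1} y^{d-2} z`, which vanishes because `q d (d - 1) = k (d - k)`.
Writing `k = m + 1` and `d = 2m + n + 4` frees every exponent of truncated subtraction, so the
cancellation becomes a ring identity.
-/

open MvPolynomial

noncomputable def trinomial (R : Type*) [CommSemiring R] (d k : ℕ) : MvPolynomial (Fin 3) R :=
  X 0 ^ d + X 0 ^ (d - k) * X 1 ^ k + X 1 ^ (d - 1) * X 2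

section Trinomial

variable {R : Type*} [CommSemiring R] (d k : ℕ)

theorem pderiv_zero_trinomial :
    pderiv 0 (trinomial R d k) =
      (d : MvPolynomial (Fin 3) R) * X 0 ^ (d - 1) +
        ((d - k : ℕ) : MvPolynomial (Fin 3) R) * X 0 ^ (d - k - 1) * X 1 ^ k := by
  simp only [trinomial, map_add, Derivation.leibniz_pow, Derivation.leibniz, pderiv_X,
    Pi.single_eq_same, ne_eq, Fin.reduceEq, not_false_eq_true, Pi.single_eq_of_ne, smul_eq_mul,
    nsmul_eq_mul, mul_zero, mul_one, zero_add, add_zero]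
  ring

theorem pderiv_one_trinomial :
    pderiv 1 (trinomial R d k) =
      (k : MvPolynomial (Fin 3) R) * X 0 ^ (d - k) * X 1 ^ (k - 1) +
        ((d - 1 : ℕ) : MvPolynomial (Fin 3) R) * X 1 ^ (d - 1 - 1) * X 2 := by
  simp only [trinomial, map_add, Derivation.leibniz_pow, Derivation.leibniz, pderiv_X,
    Pi.single_eq_same, ne_eq, Fin.reduceEq, not_false_eq_true, Pi.single_eq_of_ne, smul_eq_mul,
    nsmul_eq_mul, mul_zero, mul_one, zero_add, add_zero]
  ring

theorem pderiv_two_trinomial : pderiv 2 (trinomial R d k) = X 1 ^ (d - 1) := by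
  simp [trinomial]

end Trinomial

theorem trinomial_syzygy_identity {R : Type*} [CommRing R] (m n : ℕ) (x y z q k d α β γ : R)
    (hα : k * α = q * d) (hβ : k * β = q * (d - k)) (hγ : k * γ = d)
    (hdα : (d - 1) * α = d - k) :
    y ^ m * (q * x ^ (n + 2) + y ^ (n + 1) * z) *
        (d * x ^ (2 * m + n + 3) + (d - k) * x ^ (m + n + 2) * y ^ (m + 1))
      - (α * x ^ (m + n + 2) + β * x ^ (n + 1) * y ^ (m + 1) + γ * x ^ m * y ^ (n + 1) * z) *
        (k * x ^ (m + n + 3) * y ^ m + (d - 1) * y ^ (2 * m + n + 2) * z)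
      + ((d - 1) * β * x ^ (n + 1) * y ^ m * z + (d - 1) * γ * x ^ m * y ^ n * z ^ 2) *
        y ^ (2 * m + n + 3) = 0 := by
  linear_combination (-x ^ (2 * m + 2 * n + 5) * y ^ m) * hα
    - x ^ (m + 2 * n + 4) * y ^ (2 * m + 1) * hβ
    - x ^ (2 * m + n + 3) * y ^ (m + n + 1) * z * hγ
    - x ^ (m + n + 2) * y ^ (2 * m + n + 2) * z * hdα

theorem trinomial_syzygy {K : Type*} [Field K] (d k : ℕ) (hkd : 2 * (k + 1) ≤ d)
    (hk0 : (k : K) ≠ 0) (q : K) (hq : q * (d * (d - 1)) = (d - k) * k)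
    (a b c : MvPolynomial (Fin 3) K)
    (ha : a = X 1 ^ (k - 1) * (C q * X 0 ^ (d - 2 * k) + X 1 ^ (d - 2 * k - 1) * X 2))
    (hb : b = -(C ((q * d) / k) * X 0 ^ (d - k - 1)
        + C ((q * ((d : K) - k)) / k) * X 0 ^ (d - 2 * k - 1) * X 1 ^ k
        + C ((d : K) / k) * X 0 ^ (k - 1) * X 1 ^ (d - 2 * k - 1) * X 2))
    (hc : c = C (((d : K) - 1) * ((q * ((d : K) - k)) / k)) * X 0 ^ (d - 2 * k - 1) * X 1 ^ (k - 1) * X 2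
        + C (((d : K) - 1) * ((d : K) / k)) * X 0 ^ (k - 1) * X 1 ^ (d - 2 * k - 2) * X 2 ^ 2) :
    a * pderiv 0 (trinomial K d k) + b * pderiv 1 (trinomial K d k)
      + c * pderiv 2 (trinomial K d k) = 0 := by
  have hα := congrArg (C (σ := Fin 3)) (mul_div_cancel₀ (q * d) hk0)
  have hβ := congrArg (C (σ := Fin 3)) (mul_div_cancel₀ (q * (d - k)) hk0)
  have hγ := congrArg (C (σ := Fin 3)) (mul_div_cancel₀ (d : K) hk0)
  have hdα : ((d : K) - 1) * (q * d / k) = d - k := by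
    field_simp
    linear_combination hq
  replace hdα := congrArg (C (σ := Fin 3)) hdα
  subst ha hb hc
  rw [pderiv_zero_trinomial, pderiv_one_trinomial, pderiv_two_trinomial]
  simp only [map_mul, map_sub, map_one, map_natCast] at hα hβ hγ hdα ⊢
  obtain ⟨m, rfl⟩ : ∃ m, k = m + 1 :=
    Nat.exists_eq_succ_of_ne_zero (by rintro rfl; exact hk0 Nat.cast_zero)
  obtain ⟨n, rfl⟩ : ∃ n, d = 2 * m + n + 4 := ⟨d - (2 * m + 4), by omega⟩
  simp only [show 2 * m + n + 4 - 2 * (m + 1) = n + 2 by omega,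
    show 2 * m + n + 4 - (m + 1) = m + n + 3 by omega,
    show 2 * m + n + 4 - 1 = 2 * m + n + 3 by omega, Nat.add_sub_cancel]
  push_cast at hα hβ hγ hdα ⊢
  linear_combination trinomial_syzygy_identity m n (X 0) (X 1) (X 2) (C q) _ _ _ _ _ hα hβ hγ hdα

theorem stmt_5_general (d k : ℕ) (hk : 2 ≤ k + 1) (hkd : 2 * (k + 1) ≤ d)
    (q : ℂ) (hq : q = (((d : ℂ) - k) * k) / ((d : ℂ) * ((d : ℂ) - 1)))
    (f a b c : MvPolynomial (Fin 3) ℂ)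
    (hf : f = X 0 ^ d + X 0 ^ (d - k) * X 1 ^ k + X 1 ^ (d - 1) * X 2)
    (ha : a = X 1 ^ (k - 1) * (C q * X 0 ^ (d - 2 * k) + X 1 ^ (d - 2 * k - 1) * X 2))
    (hb : b = -(C ((q * d) / k) * X 0 ^ (d - k - 1)
        + C ((q * ((d : ℂ) - k)) / k) * X 0 ^ (d - 2 * k - 1) * X 1 ^ k
        + C ((d : ℂ) / k) * X 0 ^ (k - 1) * X 1 ^ (d - 2 * k - 1) * X 2))
    (hc : c = C (((d : ℂ) - 1) * ((q * ((d : ℂ) - k)) / k)) * X 0 ^ (d - 2 * k - 1) * X 1 ^ (k - 1) * X 2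
        + C (((d : ℂ) - 1) * ((d : ℂ) / k)) * X 0 ^ (k - 1) * X 1 ^ (d - 2 * k - 2) * X 2 ^ 2) :
    a * pderiv 0 f + b * pderiv 1 f + c * pderiv 2 f = 0 := by
  have hk0 : (k : ℂ) ≠ 0 := by exact_mod_cast (by omega : k ≠ 0)
  have hd0 : (d : ℂ) ≠ 0 := by exact_mod_cast (by omega : d ≠ 0)
  have hd1 : (d : ℂ) - 1 ≠ 0 := sub_ne_zero.mpr (by exact_mod_cast (by omega : d ≠ 1))
  have hq' : q * (d * (d - 1)) = (d - k) * k := by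
    rw [hq]
    exact div_mul_cancel₀ _ (mul_ne_zero hd0 hd1)
  subst hf
  exact trinomial_syzygy d k hkd hk0 q hq' a b c ha hb hc

theorem stmt_5 (d k : ℕ) (hk : 2 ≤ k + 1) (hkd : 2 * (k + 1) ≤ d) (hkd' : 2 * k + 2 < d)
    (q : ℂ) (hq : q = (((d : ℂ) - k) * k) / ((d : ℂ) * ((d : ℂ) - 1)))
    (f a b c : MvPolynomial (Fin 3) ℂ)
    (hf : f = X 0 ^ d + X 0 ^ (d - k) * X 1 ^ k + X 1 ^ (d - 1) * X 2)
    (ha : a = X 1 ^ (k - 1) * (C q * X 0 ^ (d - 2 * k) + X 1 ^ (d - 2 * k - 1) * X 2))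
    (hb : b = -(C ((q * d) / k) * X 0 ^ (d - k - 1)
        + C ((q * ((d : ℂ) - k)) / k) * X 0 ^ (d - 2 * k - 1) * X 1 ^ k
        + C ((d : ℂ) / k) * X 0 ^ (k - 1) * X 1 ^ (d - 2 * k - 1) * X 2))
    (hc : c = C (((d : ℂ) - 1) * ((q * ((d : ℂ) - k)) / k)) * X 0 ^ (d - 2 * k - 1) * X 1 ^ (k - 1) * X 2
        + C (((d : ℂ) - 1) * ((d : ℂ) / k)) * X 0 ^ (k - 1) * X 1 ^ (d - 2 * k - 2) * X 2 ^ 2) :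
    a * pderiv 0 f + b * pderiv 1 f + c * pderiv 2 f = 0 :=
  stmt_5_general d k hk hkd q hq f a b c hf ha hb hc
end

section
/- Let k ≥ 1 and f = x^{2k} + x^k y^k + y^{2k−1} z ∈ ℂ[x,y,z]. Then there exist two ℂ[x,y,z]-linearly independent syzygies a·f_x + b·f_y + c·f_z = 0 with a, b, c homogeneous of degree k. -/
/-!
Write k = m + 1. Since f_z = y^{2k-1}, a pair (a, b) extends to a syzygy (a, b, c) as soon as
a f_x + b f_y is divisible by y^{2k-1}; this holds for (0, y^k) and for (y^k, -2 x^{k-1} y).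
The two syzygies are independent because their first two coordinates form the triangular
matrix with y^k on the antidiagonal.
-/

open MvPolynomial

section Triangular

variable {R M N : Type*} [Ring R] [AddCommGroup M] [Module R M] [AddCommGroup N] [Module R N]

lemma linearIndependent_triangular_pair {p : M} (hp : ∀ r : R, r • p = 0 → r = 0)
    (q : M) (u w : N) : LinearIndependent R ![((0 : M), p, u), (p, q, w)] := by
  refine LinearIndependent.pair_iff.mpr fun s t hst => ?_
  have ht : t = 0 := hp t (by simpa using congrArg Prod.fst hst)
  subst ht
  exact ⟨hp s (by simpa using congrArg (fun v => v.2.1) hst), rfl⟩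

end Triangular

section Monomials

variable {R σ : Type*} [CommRing R]

lemma smul_X_pow_eq_zero_iff (i : σ) (n : ℕ) (r : R) :
    r • (X i ^ n : MvPolynomial σ R) = 0 ↔ r = 0 := by
  rw [smul_eq_C_mul, C_mul_X_pow_eq_monomial, monomial_eq_zero]

lemma isHomogeneous_X_pow_mul_X (i j : σ) (m : ℕ) :
    (X i ^ m * X j : MvPolynomial σ R).IsHomogeneous (m + 1) :=
  (isHomogeneous_X_pow i m).mul (isHomogeneous_X R j)

end Monomials

namespace NearlyFreeCurve

def IsSyzygy {R : Type*} [CommRing R] (f : MvPolynomial (Fin 3) R)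
    (s : MvPolynomial (Fin 3) R × MvPolynomial (Fin 3) R × MvPolynomial (Fin 3) R) : Prop :=
  s.1 * pderiv 0 f + s.2.1 * pderiv 1 f + s.2.2 * pderiv 2 f = 0

variable (R : Type*) [CommRing R]

noncomputable def poly (k : ℕ) : MvPolynomial (Fin 3) R :=
  X 0 ^ (2 * k) + X 0 ^ k * X 1 ^ k + X 1 ^ (2 * k - 1) * X 2

noncomputable def syzygy₁ (m : ℕ) :
    MvPolynomial (Fin 3) R × MvPolynomial (Fin 3) R × MvPolynomial (Fin 3) R :=
  (0, X 1 ^ (m + 1), -(C (m + 1 : R) * X 0 ^ (m + 1) + C (2 * m + 1 : R) * (X 1 ^ m * X 2)))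

noncomputable def syzygy₂ (m : ℕ) :
    MvPolynomial (Fin 3) R × MvPolynomial (Fin 3) R × MvPolynomial (Fin 3) R :=
  (X 1 ^ (m + 1), C (-2 : R) * (X 0 ^ m * X 1),
    C (-(m + 1) : R) * (X 0 ^ m * X 1) + C (2 * (2 * m + 1) : R) * (X 0 ^ m * X 2))

variable {R}

lemma two_mul_succ_sub_one (m : ℕ) : 2 * (m + 1) - 1 = 2 * m + 1 := by omega

lemma pderiv_zero_poly (m : ℕ) :
    pderiv 0 (poly R (m + 1)) =
      (2 * (m + 1) : MvPolynomial (Fin 3) R) * X 0 ^ (2 * m + 1) +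
        (m + 1 : MvPolynomial (Fin 3) R) * X 0 ^ m * X 1 ^ (m + 1) := by
  simp only [poly, map_add, pderiv_mul, pderiv_pow, pderiv_X_self, pderiv_X_of_ne, ne_eq,
    Fin.reduceEq, not_false_eq_true, two_mul_succ_sub_one, Nat.add_sub_cancel]
  push_cast
  ring

lemma pderiv_one_poly (m : ℕ) :
    pderiv 1 (poly R (m + 1)) =
      (m + 1 : MvPolynomial (Fin 3) R) * X 0 ^ (m + 1) * X 1 ^ m +
        (2 * m + 1 : MvPolynomial (Fin 3) R) * X 1 ^ (2 * m) * X 2 := by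
  simp only [poly, map_add, pderiv_mul, pderiv_pow, pderiv_X_self, pderiv_X_of_ne, ne_eq,
    Fin.reduceEq, not_false_eq_true, two_mul_succ_sub_one, Nat.add_sub_cancel]
  push_cast
  ring

lemma pderiv_two_poly (m : ℕ) :
    pderiv 2 (poly R (m + 1)) = X 1 ^ (2 * m + 1) := by
  simp only [poly, map_add, pderiv_mul, pderiv_pow, pderiv_X_self, pderiv_X_of_ne, ne_eq,
    Fin.reduceEq, not_false_eq_true, two_mul_succ_sub_one, Nat.add_sub_cancel]
  ring

lemma isSyzygy_syzygy₁ (m : ℕ) : IsSyzygy (poly R (m + 1)) (syzygy₁ R m) := by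
  simp only [IsSyzygy, syzygy₁, pderiv_zero_poly, pderiv_one_poly, pderiv_two_poly, map_add,
    map_mul, map_natCast, map_ofNat, map_one]
  ring

lemma isSyzygy_syzygy₂ (m : ℕ) : IsSyzygy (poly R (m + 1)) (syzygy₂ R m) := by
  simp only [IsSyzygy, syzygy₂, pderiv_zero_poly, pderiv_one_poly, pderiv_two_poly, map_add,
    map_mul, map_neg, map_natCast, map_ofNat, map_one]
  ring

lemma isHomogeneous_syzygy₁ (m : ℕ) :
    (syzygy₁ R m).1.IsHomogeneous (m + 1) ∧ (syzygy₁ R m).2.1.IsHomogeneous (m + 1) ∧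
      (syzygy₁ R m).2.2.IsHomogeneous (m + 1) :=
  ⟨isHomogeneous_zero _ _ _, isHomogeneous_X_pow _ _,
    ((isHomogeneous_C_mul_X_pow _ _ _).add ((isHomogeneous_X_pow_mul_X _ _ _).C_mul _)).neg⟩

lemma isHomogeneous_syzygy₂ (m : ℕ) :
    (syzygy₂ R m).1.IsHomogeneous (m + 1) ∧ (syzygy₂ R m).2.1.IsHomogeneous (m + 1) ∧
      (syzygy₂ R m).2.2.IsHomogeneous (m + 1) :=
  ⟨isHomogeneous_X_pow _ _, (isHomogeneous_X_pow_mul_X _ _ _).C_mul _,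
    ((isHomogeneous_X_pow_mul_X _ _ _).C_mul _).add ((isHomogeneous_X_pow_mul_X _ _ _).C_mul _)⟩

lemma linearIndependent_syzygy₁_syzygy₂ (m : ℕ) :
    LinearIndependent R ![syzygy₁ R m, syzygy₂ R m] :=
  linearIndependent_triangular_pair (fun r => (smul_X_pow_eq_zero_iff 1 (m + 1) r).mp) _ _ _

end NearlyFreeCurve

open NearlyFreeCurve in
theorem stmt_6 (k : ℕ) (hk : 1 ≤ k) (f : MvPolynomial (Fin 3) ℂ)
    (hf : f = X 0 ^ (2 * k) + X 0 ^ k * X 1 ^ k + X 1 ^ (2 * k - 1) * X 2) :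
    ∃ a b c a' b' c' : MvPolynomial (Fin 3) ℂ,
      a.IsHomogeneous k ∧ b.IsHomogeneous k ∧ c.IsHomogeneous k ∧
      a'.IsHomogeneous k ∧ b'.IsHomogeneous k ∧ c'.IsHomogeneous k ∧
      a * pderiv 0 f + b * pderiv 1 f + c * pderiv 2 f = 0 ∧
      a' * pderiv 0 f + b' * pderiv 1 f + c' * pderiv 2 f = 0 ∧
      LinearIndependent ℂ
        ![((a, b, c) : MvPolynomial (Fin 3) ℂ × MvPolynomial (Fin 3) ℂ × MvPolynomial (Fin 3) ℂ),
          (a', b', c')] := by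
  obtain ⟨m, rfl⟩ : ∃ m, k = m + 1 := ⟨k - 1, by omega⟩
  obtain rfl : f = poly ℂ (m + 1) := hf
  obtain ⟨ha, hb, hc⟩ := isHomogeneous_syzygy₁ (R := ℂ) m
  obtain ⟨ha', hb', hc'⟩ := isHomogeneous_syzygy₂ (R := ℂ) m
  exact ⟨_, _, _, _, _, _, ha, hb, hc, ha', hb', hc', isSyzygy_syzygy₁ m, isSyzygy_syzygy₂ m,
    linearIndependent_syzygy₁_syzygy₂ m⟩
end
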